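/- arXiv:1009.5581 — 2 statements merged into one kernel-verified Lean document; each statement's English description precedes it below -/
import Mathlib

section
/- Let μ satisfy μ(t) = b t^ρ + O(t^α) as t → ∞, with 0 < α < ρ < 1 and b > 0, and let K(z) = ∫₀^∞ dμ(t)/(z+t). Then K(z) = (bπρ/sin(πρ)) z^{ρ−1} + O(|z|^{α−1}) as |z| → ∞, uniformly in any sector |arg z| < π − δ. -/
/-!
Write `F(s) = μ((0, s]) = f s - f 0`. By Fubini, `∫ (z + t)⁻¹ dμ(t) = ∫₀^∞ F(s) (z + s)⁻² ds`.
The main part `b s^ρ` of `F` contributes `b ∫₀^∞ s^ρ (z + s)⁻² ds = (b π ρ / sin (π ρ)) z^(ρ-1)`: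
for `z > 0` this is a Beta integral after substituting `s = z u / (1 - u)`, and it extends to the
slit plane by analytic continuation. The remainder `|F(s) - b s^ρ| ≤ M + C s^α` is integrated
against `|z + s|⁻² ≤ cos ((π - δ) / 2)⁻² (|z| + s)⁻²`, valid in the sector, giving
`O(|z|⁻¹ + |z|^(α-1)) = O(|z|^(α-1))`.
-/

open MeasureTheory Complex Real Set Filter Topology

lemma cos_half_arg_mul_add_le_norm_add_ofReal (z : ℂ) {t : ℝ} (ht : 0 ≤ t) :
    Real.cos (arg z / 2) * (‖z‖ + t) ≤ ‖z + t‖ := by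
  set k := Real.cos (arg z / 2)
  have hk0 : 0 ≤ k := Real.cos_nonneg_of_mem_Icc
    ⟨by linarith [neg_pi_lt_arg z], by linarith [arg_le_pi z]⟩
  have hk1 : k ^ 2 ≤ 1 := by rw [sq_le_one_iff_abs_le_one]; exact abs_cos_le_one _
  have hre : z.re = ‖z‖ * (2 * k ^ 2 - 1) := by
    rw [Real.cos_sq, show 2 * (arg z / 2) = arg z by ring, ← norm_mul_cos_arg]; ring
  have hsq : ‖z + t‖ ^ 2 = ‖z‖ ^ 2 + 2 * t * z.re + t ^ 2 := by
    rw [Complex.sq_norm, Complex.sq_norm, normSq_apply, normSq_apply]; simp; ring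
  refine (pow_le_pow_iff_left₀ (by positivity) (norm_nonneg _) two_ne_zero).1 ?_
  rw [hsq, hre]
  -- the difference of the two squares is `(1 - k²) (‖z‖ - t)²`
  nlinarith [mul_nonneg (sub_nonneg.2 hk1) (sq_nonneg (‖z‖ - t))]

lemma cos_half_mul_add_le_norm_add_ofReal_of_abs_arg_le {z : ℂ} {θ t : ℝ} (hθ : |arg z| ≤ θ)
    (hθπ : θ ≤ π) (ht : 0 ≤ t) : Real.cos (θ / 2) * (‖z‖ + t) ≤ ‖z + t‖ := by
  refine le_trans ?_ (cos_half_arg_mul_add_le_norm_add_ofReal z ht)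
  rw [← Real.cos_abs (arg z / 2), abs_div, abs_two]
  gcongr
  exact Real.cos_le_cos_of_nonneg_of_le_pi (by positivity) (by linarith [abs_nonneg (arg z)])
    (by linarith)

lemma exists_eventually_mul_add_le_norm_add_ofReal {z₀ : ℂ} (hz₀ : z₀ ∈ slitPlane) :
    ∃ c > 0, ∃ r > 0, ∀ᶠ w : ℂ in 𝓝 z₀, ∀ t : ℝ, 0 ≤ t → c * (r + t) ≤ ‖w + t‖ := by
  have hcos : 0 < Real.cos (arg z₀ / 2) := Real.cos_pos_of_mem_Ioo
    ⟨by linarith [neg_pi_lt_arg z₀],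
      by linarith [lt_of_le_of_ne (arg_le_pi z₀) (slitPlane_arg_ne_pi hz₀)]⟩
  have hnorm : 0 < ‖z₀‖ := norm_pos_iff.2 (slitPlane_ne_zero hz₀)
  refine ⟨Real.cos (arg z₀ / 2) / 2, by positivity, ‖z₀‖ / 2, by positivity, ?_⟩
  have hcont : ContinuousAt (fun w => Real.cos (arg w / 2)) z₀ :=
    Real.continuous_cos.continuousAt.comp ((continuousAt_arg hz₀).div_const 2)
  filter_upwards [hcont.eventually (lt_mem_nhds (half_lt_self hcos)),
    continuous_norm.continuousAt.eventually (lt_mem_nhds (half_lt_self hnorm))] with w hc hr t ht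
  calc Real.cos (arg z₀ / 2) / 2 * (‖z₀‖ / 2 + t)
      ≤ Real.cos (arg w / 2) * (‖w‖ + t) := by gcongr; linarith
    _ ≤ ‖w + t‖ := cos_half_arg_mul_add_le_norm_add_ofReal w ht

lemma norm_inv_pow_le_inv_pow {𝕜 : Type*} [NormedDivisionRing 𝕜] {x : 𝕜} {a : ℝ} (ha : 0 < a)
    (h : a ≤ ‖x‖) (n : ℕ) : ‖(x ^ n)⁻¹‖ ≤ (a ^ n)⁻¹ := by
  rw [norm_inv, norm_pow]
  exact inv_anti₀ (by positivity) (pow_le_pow_left₀ ha.le h n)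

lemma integrableOn_Ioi_rpow_mul_inv_add_sq {β a : ℝ} (hβ₀ : -1 < β) (hβ₁ : β < 1) (ha : 0 < a) :
    IntegrableOn (fun s : ℝ => s ^ β * ((a + s) ^ 2)⁻¹) (Ioi 0) := by
  have hmeas : Measurable fun s : ℝ => s ^ β * ((a + s) ^ 2)⁻¹ := by fun_prop
  rw [← Ioc_union_Ioi_eq_Ioi ha.le]
  refine IntegrableOn.union ?_ ?_
  · have hdom : IntegrableOn (fun s : ℝ => s ^ β * (a ^ 2)⁻¹) (Ioc 0 a) :=
      ((intervalIntegrable_iff_integrableOn_Ioc_of_le ha.le).1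
        (intervalIntegral.intervalIntegrable_rpow' hβ₀)).mul_const _
    refine hdom.mono' hmeas.aestronglyMeasurable
      ((ae_restrict_mem measurableSet_Ioc).mono fun s ⟨hs₀, _⟩ => ?_)
    rw [norm_of_nonneg (by positivity)]
    gcongr
    linarith
  · have hdom : IntegrableOn (fun s : ℝ => s ^ (β - 2)) (Ioi a) :=
      integrableOn_Ioi_rpow_of_lt (by linarith) ha
    refine hdom.mono' hmeas.aestronglyMeasurable
      ((ae_restrict_mem measurableSet_Ioi).mono fun s (hs : a < s) => ?_)
    have hs₀ : 0 < s := ha.trans hs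
    rw [norm_of_nonneg (by positivity), rpow_sub hs₀, rpow_two, div_eq_mul_inv]
    gcongr
    linarith

lemma integrableOn_Ioi_inv_add_sq {a : ℝ} (ha : 0 < a) :
    IntegrableOn (fun s : ℝ => ((a + s) ^ 2)⁻¹) (Ioi 0) := by
  simpa using integrableOn_Ioi_rpow_mul_inv_add_sq (β := 0) (by norm_num) one_pos ha

lemma integral_Ioo_rpow_mul_one_sub_rpow_neg {ρ : ℝ} (hρ₀ : -1 < ρ) (hρ₁ : ρ < 1) (hρ : ρ ≠ 0) :
    ∫ s in Ioo (0 : ℝ) 1, s ^ ρ * (1 - s) ^ (-ρ) = π * ρ / Real.sin (π * ρ) := by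
  have hsin : Real.sin (π * ρ) ≠ 0 := by
    rw [Ne, Real.sin_eq_zero_iff_of_lt_of_lt (by nlinarith [pi_pos]) (by nlinarith [pi_pos])]
    exact mul_ne_zero pi_ne_zero hρ
  -- `B(ρ + 1, 1 - ρ) = Γ(ρ + 1) Γ(1 - ρ) / Γ(2) = ρ Γ(ρ) Γ(1 - ρ)`, then the reflection formula
  have hbeta : betaIntegral (ρ + 1) (1 - ρ) = ρ * (π / Complex.sin (π * ρ)) := by
    have h := Complex.Gamma_mul_Gamma_eq_betaIntegral (s := ρ + 1) (t := 1 - ρ)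
      (by simp; linarith) (by simp; linarith)
    rw [show (ρ : ℂ) + 1 + (1 - ρ) = 1 + 1 by ring, Complex.Gamma_add_one _ one_ne_zero,
      Complex.Gamma_one, Complex.Gamma_add_one _ (ofReal_ne_zero.2 hρ), mul_one, one_mul,
      mul_assoc, Complex.Gamma_mul_Gamma_one_sub] at h
    exact h.symm
  have hreal : betaIntegral (ρ + 1) (1 - ρ) = ∫ s in Ioo (0 : ℝ) 1, s ^ ρ * (1 - s) ^ (-ρ) := by
    rw [betaIntegral, intervalIntegral.integral_of_le zero_le_one, integral_Ioc_eq_integral_Ioo,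
      ← integral_complex_ofReal]
    refine setIntegral_congr_fun measurableSet_Ioo fun s hs => ?_
    have h1s : 0 ≤ 1 - s := by linarith [hs.2]
    rw [ofReal_mul, ofReal_cpow hs.1.le, ofReal_cpow h1s]
    push_cast
    ring_nf
  apply ofReal_injective
  rw [← hreal, hbeta]
  push_cast
  field_simp

lemma integral_Ioi_rpow_mul_inv_add_sq {ρ x : ℝ} (hρ₀ : -1 < ρ) (hρ₁ : ρ < 1) (hρ : ρ ≠ 0)
    (hx : 0 < x) :
    ∫ t in Ioi (0 : ℝ), t ^ ρ * ((x + t) ^ 2)⁻¹ = π * ρ / Real.sin (π * ρ) * x ^ (ρ - 1) := by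
  set φ : ℝ → ℝ := fun s => x * s / (1 - s)
  have himage : φ '' Ioo 0 1 = Ioi 0 := by
    ext t
    refine ⟨?_, fun (ht : 0 < t) => ⟨t / (x + t), ⟨by positivity, ?_⟩, ?_⟩⟩
    · rintro ⟨s, hs, rfl⟩
      exact div_pos (mul_pos hx hs.1) (by linarith [hs.2])
    · rw [div_lt_one (by positivity)]; linarith
    · have : x + t ≠ 0 := by positivity
      simp only [φ]
      rw [one_sub_div this, add_sub_cancel_right]
      field_simp
  have hderiv : ∀ s ∈ Ioo (0 : ℝ) 1, HasDerivWithinAt φ (x / (1 - s) ^ 2) (Ioo 0 1) s := by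
    intro s hs
    have h1s : 1 - s ≠ 0 := by linarith [hs.2]
    refine (((hasDerivAt_id s).const_mul x).div ((hasDerivAt_id s).const_sub 1) h1s)
      |>.hasDerivWithinAt.congr_deriv ?_
    simp only [id]
    field_simp
    ring
  have hinj : InjOn φ (Ioo 0 1) := by
    intro s₁ hs₁ s₂ hs₂ h
    have h₁ : 1 - s₁ ≠ 0 := by linarith [hs₁.2]
    have h₂ : 1 - s₂ ≠ 0 := by linarith [hs₂.2]
    simp only [φ] at h
    field_simp at h
    nlinarith
  have hintegrand : ∀ s ∈ Ioo (0 : ℝ) 1, |x / (1 - s) ^ 2| • (φ s ^ ρ * ((x + φ s) ^ 2)⁻¹)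
      = x ^ (ρ - 1) * (s ^ ρ * (1 - s) ^ (-ρ)) := by
    intro s ⟨hs₀, hs₁⟩
    have h1s : 0 < 1 - s := by linarith
    have hxφ : x + φ s = x / (1 - s) := by simp only [φ]; field_simp; ring
    have hφ : φ s ^ ρ = x ^ ρ * s ^ ρ / (1 - s) ^ ρ := by
      rw [div_rpow (by positivity) h1s.le, mul_rpow hx.le hs₀.le]
    rw [abs_of_pos (by positivity), smul_eq_mul, hxφ, hφ, rpow_neg h1s.le, rpow_sub_one hx.ne']
    have := rpow_pos_of_pos h1s ρ
    field_simp
  rw [← himage, integral_image_eq_integral_abs_deriv_smul measurableSet_Ioo hderiv hinj,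
    setIntegral_congr_fun measurableSet_Ioo hintegrand, integral_const_mul,
    integral_Ioo_rpow_mul_one_sub_rpow_neg hρ₀ hρ₁ hρ]
  ring

lemma add_ofReal_ne_zero_of_mem_slitPlane {z : ℂ} (hz : z ∈ slitPlane) {t : ℝ} (ht : 0 ≤ t) :
    z + t ≠ 0 := by
  refine slitPlane_ne_zero ?_
  rcases mem_slitPlane_iff.1 hz with h | h
  · exact mem_slitPlane_iff.2 (Or.inl (by simp; linarith))
  · exact mem_slitPlane_iff.2 (Or.inr (by simpa using h))

lemma norm_mul_inv_add_ofReal_sq_le {x z : ℂ} {c r s M C β : ℝ} (hc : 0 < c) (hr : 0 < r)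
    (hs : 0 ≤ s) (hlow : c * (r + s) ≤ ‖z + s‖) (hx : ‖x‖ ≤ M + C * s ^ β) :
    ‖x * ((z + s) ^ 2)⁻¹‖ ≤ (c ^ 2)⁻¹ * (M * ((r + s) ^ 2)⁻¹ + C * (s ^ β * ((r + s) ^ 2)⁻¹)) :=
  calc ‖x * ((z + s) ^ 2)⁻¹‖ ≤ (M + C * s ^ β) * ((c * (r + s)) ^ 2)⁻¹ := by
        rw [norm_mul]
        exact mul_le_mul hx (norm_inv_pow_le_inv_pow (by positivity) hlow 2) (norm_nonneg _)
          ((norm_nonneg _).trans hx)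
    _ = _ := by rw [mul_pow, mul_inv]; ring

lemma integrableOn_mul_inv_add_ofReal_sq {z : ℂ} (hz : z ∈ slitPlane) {β M C : ℝ}
    (hβ₀ : -1 < β) (hβ₁ : β < 1) {g : ℝ → ℂ} (hg : AEStronglyMeasurable g (volume.restrict (Ioi 0)))
    (hbound : ∀ s > 0, ‖g s‖ ≤ M + C * s ^ β) :
    IntegrableOn (fun s : ℝ => g s * ((z + s) ^ 2)⁻¹) (Ioi 0) := by
  obtain ⟨c, hc, r, hr, hev⟩ := exists_eventually_mul_add_le_norm_add_ofReal hz
  refine ((((integrableOn_Ioi_inv_add_sq hr).const_mul M).add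
      ((integrableOn_Ioi_rpow_mul_inv_add_sq hβ₀ hβ₁ hr).const_mul C)).const_mul (c ^ 2)⁻¹).mono'
    (hg.mul (by fun_prop : Measurable fun s : ℝ => ((z + s) ^ 2)⁻¹).aestronglyMeasurable)
    ((ae_restrict_mem measurableSet_Ioi).mono fun s (hs : 0 < s) => ?_)
  exact norm_mul_inv_add_ofReal_sq_le hc hr hs.le (hev.self_of_nhds s hs.le) (hbound s hs)

lemma integral_Ioi_inv_add_ofReal_sq {z : ℂ} (hz : z ∈ slitPlane) {t : ℝ} (ht : 0 ≤ t) :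
    ∫ s in Ioi t, ((z + s) ^ 2)⁻¹ = (z + t)⁻¹ := by
  have hderiv : ∀ s ∈ Ioi t, HasDerivAt (fun s : ℝ => -(z + s)⁻¹) (((z + s) ^ 2)⁻¹) s := by
    intro s (hs : t < s)
    exact (((hasDerivAt_id (s : ℂ)).const_add z).inv
      (add_ofReal_ne_zero_of_mem_slitPlane hz (ht.trans hs.le))).neg.comp_ofReal.congr_deriv
      (by simp only [id, neg_div, neg_neg, one_div])
  have hcont : ContinuousWithinAt (fun s : ℝ => -(z + s)⁻¹) (Ici t) t :=
    ((continuous_const.add continuous_ofReal).continuousAt.inv₀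
      (add_ofReal_ne_zero_of_mem_slitPlane hz ht)).neg.continuousWithinAt
  have hint : IntegrableOn (fun s : ℝ => ((z + s) ^ 2)⁻¹) (Ioi 0) := by
    simpa using integrableOn_mul_inv_add_ofReal_sq hz (β := 0) (M := 1) (C := 0)
      (g := fun _ => 1) (by norm_num) one_pos aestronglyMeasurable_const (by simp)
  have hlim : Tendsto (fun s : ℝ => -(z + s)⁻¹) atTop (𝓝 0) := by
    simpa using (tendsto_inv₀_cobounded.comp ((tendsto_const_add_cobounded z).comp
      (RCLike.tendsto_ofReal_atTop_cobounded ℂ))).neg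
  rw [integral_Ioi_of_hasDerivAt_of_tendsto hcont hderiv (hint.mono_set (Ioi_subset_Ioi ht)) hlim]
  ring

lemma integral_Ioi_inv_add_sq {a : ℝ} (ha : 0 < a) : ∫ s in Ioi (0 : ℝ), ((a + s) ^ 2)⁻¹ = a⁻¹ := by
  apply ofReal_injective
  rw [← integral_complex_ofReal]
  push_cast
  simpa using integral_Ioi_inv_add_ofReal_sq (ofReal_mem_slitPlane.2 ha) le_rfl

lemma hasDerivAt_inv_add_ofReal_sq {w : ℂ} {t : ℝ} (hw : w + t ≠ 0) :
    HasDerivAt (fun w : ℂ => ((w + t) ^ 2)⁻¹) (-2 * ((w + t) ^ 3)⁻¹) w := by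
  have hsq : HasDerivAt (fun w : ℂ => (w + t) ^ 2) (2 * (w + t)) w := by
    simpa using ((hasDerivAt_id w).add_const (t : ℂ)).fun_pow 2
  exact (hsq.inv (pow_ne_zero 2 hw)).congr_deriv (by field_simp)

lemma norm_mul_neg_two_mul_inv_add_ofReal_cube_le {w : ℂ} {c r t ρ : ℝ} (hc : 0 < c)
    (hr : 0 < r) (ht : 0 < t) (hlow : c * (r + t) ≤ ‖w + t‖) :
    ‖((t ^ ρ : ℝ) : ℂ) * (-2 * ((w + t) ^ 3)⁻¹)‖
      ≤ 2 * (c ^ 3 * r)⁻¹ * (t ^ ρ * ((r + t) ^ 2)⁻¹) := by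
  have hk := norm_inv_pow_le_inv_pow (by positivity) hlow 3
  rw [norm_mul, norm_mul, norm_real, norm_of_nonneg (rpow_nonneg ht.le ρ)]
  calc t ^ ρ * (‖(-2 : ℂ)‖ * ‖((w + t) ^ 3)⁻¹‖) ≤ t ^ ρ * (2 * ((c * (r + t)) ^ 3)⁻¹) := by
        gcongr; simp
    _ ≤ t ^ ρ * (2 * ((c ^ 3 * (r * (r + t) ^ 2))⁻¹)) := by
        rw [mul_pow]
        gcongr
        nlinarith
    _ = _ := by field_simp

lemma differentiableOn_integral_ofReal_rpow_mul_inv_add_sq {ρ : ℝ} (hρ₀ : -1 < ρ) (hρ₁ : ρ < 1) :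
    DifferentiableOn ℂ (fun z : ℂ => ∫ t in Ioi (0 : ℝ), ((t ^ ρ : ℝ) : ℂ) * ((z + t) ^ 2)⁻¹)
      slitPlane := by
  intro z₀ hz₀
  obtain ⟨c, hc, r, hr, hev⟩ := exists_eventually_mul_add_le_norm_add_ofReal hz₀
  have hint : IntegrableOn (fun t : ℝ => ((t ^ ρ : ℝ) : ℂ) * ((z₀ + t) ^ 2)⁻¹) (Ioi 0) :=
    integrableOn_mul_inv_add_ofReal_sq hz₀ (M := 0) (C := 1) hρ₀ hρ₁ (by fun_prop)
      fun s hs => by simp [abs_of_pos (rpow_pos_of_pos hs ρ)]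
  exact (hasDerivAt_integral_of_dominated_loc_of_deriv_le
    (F := fun (w : ℂ) (t : ℝ) => ((t ^ ρ : ℝ) : ℂ) * ((w + t) ^ 2)⁻¹)
    (F' := fun (w : ℂ) (t : ℝ) => ((t ^ ρ : ℝ) : ℂ) * (-2 * ((w + t) ^ 3)⁻¹)) hev
    (Eventually.of_forall fun w => by fun_prop) hint (by fun_prop)
    ((ae_restrict_mem measurableSet_Ioi).mono fun t (ht : 0 < t) w hw =>
      norm_mul_neg_two_mul_inv_add_ofReal_cube_le hc hr ht (hw t ht.le))
    ((integrableOn_Ioi_rpow_mul_inv_add_sq hρ₀ hρ₁ hr).const_mul _)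
    ((ae_restrict_mem measurableSet_Ioi).mono fun t (ht : 0 < t) w hw =>
      (hasDerivAt_inv_add_ofReal_sq (norm_pos_iff.1
        ((by positivity : 0 < c * (r + t)).trans_le (hw t ht.le)))).const_mul _))
    |>.2.differentiableAt.differentiableWithinAt

lemma integral_Ioi_ofReal_rpow_mul_inv_add_sq {ρ : ℝ} (hρ₀ : -1 < ρ) (hρ₁ : ρ < 1) (hρ : ρ ≠ 0)
    {z : ℂ} (hz : z ∈ slitPlane) :
    ∫ t in Ioi (0 : ℝ), ((t ^ ρ : ℝ) : ℂ) * ((z + t) ^ 2)⁻¹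
      = (π * ρ / Real.sin (π * ρ) : ℝ) * z ^ ((ρ : ℂ) - 1) := by
  have hF := (differentiableOn_integral_ofReal_rpow_mul_inv_add_sq hρ₀ hρ₁).analyticOnNhd
    isOpen_slitPlane
  have hG : AnalyticOnNhd ℂ (fun z : ℂ => (π * ρ / Real.sin (π * ρ) : ℝ) * z ^ ((ρ : ℂ) - 1))
      slitPlane :=
    DifferentiableOn.analyticOnNhd (fun w hw =>
      ((differentiableAt_id.cpow_const hw).const_mul _).differentiableWithinAt) isOpen_slitPlane
  have hreal : ∀ x : ℝ, 0 < x → ∫ t in Ioi (0 : ℝ), ((t ^ ρ : ℝ) : ℂ) * (((x : ℂ) + t) ^ 2)⁻¹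
      = (π * ρ / Real.sin (π * ρ) : ℝ) * (x : ℂ) ^ ((ρ : ℂ) - 1) := by
    intro x hx
    rw [← ofReal_one, ← ofReal_sub, ← ofReal_cpow hx.le, ← ofReal_mul,
      ← integral_Ioi_rpow_mul_inv_add_sq hρ₀ hρ₁ hρ hx, ← integral_complex_ofReal]
    push_cast
    rfl
  have hfreq : ∃ᶠ w : ℂ in 𝓝[≠] 1, (∫ t in Ioi (0 : ℝ), ((t ^ ρ : ℝ) : ℂ) * ((w + t) ^ 2)⁻¹)
      = (π * ρ / Real.sin (π * ρ) : ℝ) * w ^ ((ρ : ℂ) - 1) := by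
    have hmap : Tendsto ((↑) : ℝ → ℂ) (𝓝[>] 1) (𝓝[≠] 1) :=
      continuous_ofReal.continuousWithinAt.tendsto_nhdsWithin fun x (hx : 1 < x) => by
        simpa using hx.ne'
    exact hmap.frequently (eventually_nhdsWithin_of_forall (s := Ioi (1 : ℝ)) (a := 1)
      fun x (hx : 1 < x) => hreal x (one_pos.trans hx)).frequently
  exact hF.eqOn_of_preconnected_of_frequently_eq hG
    (starConvex_one_slitPlane.isPathConnected one_mem_slitPlane).isConnected.isPreconnected
    one_mem_slitPlane hfreq hz

lemma StieltjesFunction.measureReal_restrict_Ioi_Iic (f : StieltjesFunction ℝ) {a s : ℝ}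
    (h : a ≤ s) : (f.measure.restrict (Ioi a)).real (Iic s) = f s - f a := by
  rw [measureReal_def, Measure.restrict_apply measurableSet_Iic, Iic_inter_Ioi, f.measure_Ioc,
    ENNReal.toReal_ofReal (sub_nonneg.2 (f.mono h))]

lemma StieltjesFunction.setIntegral_Ioi_eq_integral_sub_smul {E : Type*} [NormedAddCommGroup E]
    [NormedSpace ℝ E] [CompleteSpace E] (f : StieltjesFunction ℝ) {g g' : ℝ → E}
    (hg' : AEStronglyMeasurable g' (volume.restrict (Ioi 0)))
    (hint : IntegrableOn (fun s => (f s - f 0) • g' s) (Ioi 0))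
    (hg : ∀ t > 0, g t = ∫ s in Ioi t, g' s) :
    ∫ t in Ioi 0, g t ∂f.measure = ∫ s in Ioi 0, (f s - f 0) • g' s := by
  set N := f.measure.restrict (Ioi 0)
  set ν := volume.restrict (Ioi (0 : ℝ))
  set F : ℝ → ℝ → E := fun t => (Ici t).indicator g'
  have hsection : ∀ s, (fun t => F t s) = (Iic s).indicator fun _ => g' s := by
    intro s; ext t; simp [F, indicator_apply]
  have hFmeas : AEStronglyMeasurable (Function.uncurry F) (N.prod ν) := by
    have : Function.uncurry F = {p : ℝ × ℝ | p.1 ≤ p.2}.indicator fun p => g' p.2 := by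
      ext ⟨t, s⟩; simp [F, indicator_apply]
    rw [this]
    exact hg'.comp_snd.indicator (measurableSet_le measurable_fst measurable_snd)
  have hF : Integrable (Function.uncurry F) (N.prod ν) := by
    rw [integrable_prod_iff' hFmeas]
    refine ⟨ae_of_all _ fun s => ?_, hint.norm.congr ?_⟩
    · show Integrable (fun t => F t s) N
      rw [hsection, integrable_indicator_iff measurableSet_Iic]
      exact integrableOn_const (by simp [N, Measure.restrict_apply measurableSet_Iic,
        Iic_inter_Ioi, f.measure_Ioc])
    · filter_upwards [ae_restrict_mem _root_.measurableSet_Ioi] with s (hs : 0 < s)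
      have : (fun t => ‖F t s‖) = (Iic s).indicator fun _ => ‖g' s‖ := by
        ext t; simp [F, indicator_apply, apply_ite norm]
      simp only [Function.uncurry_apply_pair]
      rw [this, integral_indicator_const _ measurableSet_Iic, f.measureReal_restrict_Ioi_Iic hs.le,
        norm_smul, norm_of_nonneg (sub_nonneg.2 (f.mono hs.le)), smul_eq_mul]
  calc ∫ t in Ioi 0, g t ∂f.measure = ∫ t, ∫ s, F t s ∂ν ∂N := by
        refine integral_congr_ae ?_
        filter_upwards [ae_restrict_mem _root_.measurableSet_Ioi] with t (ht : 0 < t)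
        rw [hg t ht, integral_indicator measurableSet_Ici,
          Measure.restrict_restrict measurableSet_Ici, inter_eq_left.2 (Ici_subset_Ioi.2 ht), integral_Ici_eq_integral_Ioi]
    _ = ∫ s, ∫ t, F t s ∂N ∂ν := integral_integral_swap hF
    _ = ∫ s in Ioi 0, (f s - f 0) • g' s := by
        refine integral_congr_ae ?_
        filter_upwards [ae_restrict_mem _root_.measurableSet_Ioi] with s (hs : 0 < s)
        rw [hsection, integral_indicator_const _ measurableSet_Iic,
          f.measureReal_restrict_Ioi_Iic hs.le]

lemma integral_inv_add_ofReal_sub_eq_integral_remainder (f : StieltjesFunction ℝ) {b ρ : ℝ}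
    (hρ₀ : -1 < ρ) (hρ₁ : ρ < 1) (hρ : ρ ≠ 0) {z : ℂ} (hz : z ∈ slitPlane)
    (hR : IntegrableOn (fun s : ℝ => ((f s - f 0 - b * s ^ ρ : ℝ) : ℂ) * ((z + s) ^ 2)⁻¹) (Ioi 0)) :
    (∫ t in Ioi (0 : ℝ), (z + t)⁻¹ ∂f.measure) -
        ((b * π * ρ / Real.sin (π * ρ) : ℝ) : ℂ) * z ^ ((ρ : ℂ) - 1)
      = ∫ s in Ioi (0 : ℝ), ((f s - f 0 - b * s ^ ρ : ℝ) : ℂ) * ((z + s) ^ 2)⁻¹ := by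
  have hpow : IntegrableOn (fun s : ℝ => ((s ^ ρ : ℝ) : ℂ) * ((z + s) ^ 2)⁻¹) (Ioi 0) :=
    integrableOn_mul_inv_add_ofReal_sq hz (M := 0) (C := 1) hρ₀ hρ₁ (by fun_prop)
      fun s hs => by simp [abs_of_pos (rpow_pos_of_pos hs ρ)]
  have hdist : IntegrableOn (fun s : ℝ => (f s - f 0) • ((z + s) ^ 2)⁻¹) (Ioi 0) :=
    (hR.add (hpow.const_mul (b : ℂ))).congr_fun
      (fun s _ => by simp only [Pi.add_apply, real_smul]; push_cast; ring)
      measurableSet_Ioi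
  rw [f.setIntegral_Ioi_eq_integral_sub_smul (by fun_prop) hdist
      fun t ht => (integral_Ioi_inv_add_ofReal_sq hz ht.le).symm,
    show ((b * π * ρ / Real.sin (π * ρ) : ℝ) : ℂ) * z ^ ((ρ : ℂ) - 1)
      = b * (((π * ρ / Real.sin (π * ρ) : ℝ) : ℂ) * z ^ ((ρ : ℂ) - 1)) by push_cast; ring,
    ← integral_Ioi_ofReal_rpow_mul_inv_add_sq hρ₀ hρ₁ hρ hz, ← integral_const_mul,
    ← integral_sub hdist (hpow.const_mul _)]
  refine setIntegral_congr_fun measurableSet_Ioi fun s _ => ?_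
  simp only [real_smul]
  push_cast
  ring

lemma exists_abs_sub_sub_mul_rpow_le {f : ℝ → ℝ} (hf : Monotone f) {b ρ α C₀ T : ℝ}
    (hρ : 0 ≤ ρ) (hα : 0 ≤ α) (hasymp : ∀ t, T ≤ t → |f t - b * t ^ ρ| ≤ C₀ * t ^ α) :
    ∃ M C, 0 ≤ M ∧ 0 ≤ C ∧ ∀ s > 0, |f s - f 0 - b * s ^ ρ| ≤ M + C * s ^ α := by
  set T₁ := max T 1
  have hT₁ : 0 < T₁ := one_pos.trans_le (le_max_right _ _)
  have hM : 0 ≤ f T₁ - f 0 + |b| * T₁ ^ ρ := by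
    have := hf hT₁.le
    have : 0 ≤ |b| * T₁ ^ ρ := by positivity
    linarith
  refine ⟨_, |C₀| + |f 0|, hM, by positivity, fun s hs => ?_⟩
  have hsα : 0 ≤ s ^ α := rpow_nonneg hs.le α
  rcases le_or_gt s T₁ with hsT | hsT
  · have hbs : |b * s ^ ρ| ≤ |b| * T₁ ^ ρ := by
      rw [abs_mul, abs_of_nonneg (rpow_nonneg hs.le ρ)]
      gcongr
    have := abs_sub (f s - f 0) (b * s ^ ρ)
    rw [abs_of_nonneg (sub_nonneg.2 (hf hs.le))] at this
    have := hf hsT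
    have : 0 ≤ (|C₀| + |f 0|) * s ^ α := by positivity
    linarith
  · -- beyond `T₁ ≥ 1` the constant `f 0` is absorbed into `s ^ α ≥ 1`
    have hs₁ : 1 ≤ s ^ α := one_le_rpow ((le_max_right _ _).trans hsT.le) hα
    have h₁ := (hasymp s ((le_max_left _ _).trans hsT.le)).trans
      (mul_le_mul_of_nonneg_right (le_abs_self C₀) hsα)
    have h₂ := abs_sub (f s - b * s ^ ρ) (f 0)
    have h₃ : |f 0| ≤ |f 0| * s ^ α := le_mul_of_one_le_right (abs_nonneg _) hs₁
    rw [show f s - f 0 - b * s ^ ρ = f s - b * s ^ ρ - f 0 by ring]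
    linarith

lemma norm_setIntegral_mul_inv_add_ofReal_sq_le {z : ℂ} {c M C α : ℝ} (hc : 0 < c)
    (hz : 1 ≤ ‖z‖) (hlow : ∀ t : ℝ, 0 ≤ t → c * (‖z‖ + t) ≤ ‖z + t‖) (hα₀ : 0 < α) (hα₁ : α < 1)
    (hM : 0 ≤ M) {g : ℝ → ℂ} (hg : ∀ s > 0, ‖g s‖ ≤ M + C * s ^ α) :
    ‖∫ s in Ioi (0 : ℝ), g s * ((z + s) ^ 2)⁻¹‖
      ≤ (c ^ 2)⁻¹ * (M + C * (π * α / Real.sin (π * α))) * ‖z‖ ^ (α - 1) := by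
  have hA : 0 < ‖z‖ := one_pos.trans_le hz
  have h₁ := (integrableOn_Ioi_inv_add_sq hA).const_mul M
  have h₂ := (integrableOn_Ioi_rpow_mul_inv_add_sq (by linarith) hα₁ hA).const_mul C
  have hinv : ‖z‖⁻¹ ≤ ‖z‖ ^ (α - 1) := by
    rw [← rpow_neg_one]
    exact rpow_le_rpow_of_exponent_le hz (by linarith)
  calc ‖∫ s in Ioi (0 : ℝ), g s * ((z + s) ^ 2)⁻¹‖
      ≤ ∫ s in Ioi (0 : ℝ), (c ^ 2)⁻¹ * (M * ((‖z‖ + s) ^ 2)⁻¹ + C * (s ^ α * ((‖z‖ + s) ^ 2)⁻¹)) :=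
        norm_integral_le_of_norm_le ((h₁.add h₂).const_mul _)
          ((ae_restrict_mem measurableSet_Ioi).mono fun s (hs : 0 < s) =>
            norm_mul_inv_add_ofReal_sq_le hc hA hs.le (hlow s hs.le) (hg s hs))
    _ = (c ^ 2)⁻¹ * (M * ‖z‖⁻¹ + C * (π * α / Real.sin (π * α) * ‖z‖ ^ (α - 1))) := by
        rw [integral_const_mul, integral_add h₁ h₂, integral_const_mul, integral_const_mul,
          integral_Ioi_inv_add_sq hA,
          integral_Ioi_rpow_mul_inv_add_sq (by linarith) hα₁ hα₀.ne' hA]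
    _ ≤ (c ^ 2)⁻¹ * (M * ‖z‖ ^ (α - 1) + C * (π * α / Real.sin (π * α) * ‖z‖ ^ (α - 1))) := by
        gcongr
    _ = _ := by ring

theorem cauchy_transform_asymptotics_of_distribution_general
    (f : StieltjesFunction ℝ)
    (b ρ α : ℝ) (hα0 : 0 < α) (hαρ : α < ρ) (hρ1 : ρ < 1)
    (hasymp : ∃ C₀ T : ℝ, 0 < T ∧ ∀ t : ℝ, T ≤ t → |f t - b * t ^ ρ| ≤ C₀ * t ^ α)
    (δ : ℝ) (hδ : 0 < δ) :
    ∃ C R : ℝ, 0 < C ∧ ∀ z : ℂ, R ≤ ‖z‖ → |Complex.arg z| < Real.pi - δ →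
      ‖((∫ t in Set.Ioi (0 : ℝ), (z + (t : ℂ))⁻¹ ∂f.measure) -
          ((b * Real.pi * ρ / Real.sin (Real.pi * ρ) : ℝ) : ℂ) * z ^ ((ρ : ℂ) - 1))‖ ≤
        C * ‖z‖ ^ (α - 1) := by
  have hρ0 : 0 < ρ := hα0.trans hαρ
  have hα1 : α < 1 := hαρ.trans hρ1
  rcases le_or_gt π δ with hπδ | hδπ
  · exact ⟨1, 0, one_pos, fun z _ harg => absurd harg (by linarith [abs_nonneg (arg z)])⟩
  obtain ⟨C₀, T, -, hT⟩ := hasymp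
  obtain ⟨M, C, hM, hC, hR⟩ := exists_abs_sub_sub_mul_rpow_le f.mono hρ0.le hα0.le hT
  set c := Real.cos ((π - δ) / 2)
  have hc : 0 < c := Real.cos_pos_of_mem_Ioo ⟨by linarith, by linarith⟩
  have hsin : 0 < Real.sin (π * α) :=
    sin_pos_of_pos_of_lt_pi (by positivity) (by nlinarith [pi_pos])
  refine ⟨(c ^ 2)⁻¹ * (M + C * (π * α / Real.sin (π * α))) + 1, 1, by positivity,
    fun z hz harg => ?_⟩
  have hslit : z ∈ slitPlane := mem_slitPlane_iff_arg.2
    ⟨fun h => by rw [h, abs_of_pos pi_pos] at harg; linarith, norm_pos_iff.1 (by linarith)⟩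
  have hremainder : ∀ s > 0, ‖((f s - f 0 - b * s ^ ρ : ℝ) : ℂ)‖ ≤ M + C * s ^ α := fun s hs => by
    rw [norm_real, Real.norm_eq_abs]; exact hR s hs
  rw [integral_inv_add_ofReal_sub_eq_integral_remainder f (by linarith) hρ1 hρ0.ne' hslit
    (integrableOn_mul_inv_add_ofReal_sq hslit (by linarith) hα1
      (f.mono.measurable.sub_const _ |>.sub (by fun_prop)).complex_ofReal.aestronglyMeasurable
      hremainder)]
  calc _ ≤ (c ^ 2)⁻¹ * (M + C * (π * α / Real.sin (π * α))) * ‖z‖ ^ (α - 1) :=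
        norm_setIntegral_mul_inv_add_ofReal_sq_le hc hz
          (fun t ht => cos_half_mul_add_le_norm_add_ofReal_of_abs_arg_le harg.le (by linarith) ht)
          hα0 hα1 hM hremainder
    _ ≤ _ := by gcongr; linarith

theorem cauchy_transform_asymptotics_of_distribution
    (f : StieltjesFunction ℝ) (d₀ : ℝ) (hd₀ : 0 < d₀)
    (hsupp : f.measure (Set.Iic d₀) = 0)
    (b ρ α : ℝ) (hb : 0 < b) (hα0 : 0 < α) (hαρ : α < ρ) (hρ1 : ρ < 1)
    (hasymp : ∃ C₀ T : ℝ, 0 < T ∧ ∀ t : ℝ, T ≤ t → |f t - b * t ^ ρ| ≤ C₀ * t ^ α)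
    (δ : ℝ) (hδ : 0 < δ) :
    ∃ C R : ℝ, 0 < C ∧ ∀ z : ℂ, R ≤ ‖z‖ → |Complex.arg z| < Real.pi - δ →
      ‖((∫ t in Set.Ioi (0 : ℝ), (z + (t : ℂ))⁻¹ ∂f.measure) -
          ((b * Real.pi * ρ / Real.sin (Real.pi * ρ) : ℝ) : ℂ) * z ^ ((ρ : ℂ) - 1))‖ ≤
        C * ‖z‖ ^ (α - 1) :=
  cauchy_transform_asymptotics_of_distribution_general f b ρ α hα0 hαρ hρ1 hasymp δ hδ
end

section
/- Let μ be a nonzero positive measure on (0,∞) with ∫ dμ(t)/t < ∞, K its Cauchy transform, and n ≥ 1. Then the function F_n(z) = z + n²K(z) has at most one zero in the upper half-plane ℂ₊, and any such zero lies in the open second quadrant {z : Re z < 0, Im z > 0}. -/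
/-!
For `Im z > 0` all `(z + t)⁻¹`, `t > 0`, lie in the lower half-plane. At a zero of
`F(z) = z + c K(z)` the imaginary part gives `c ∫ |z + t|⁻² dμ = 1` (so `c > 0` and `μ ≠ 0`),
and then the real part `Re z = -c ∫ (Re z + t) |z + t|⁻² dμ` forces `Re z < 0`. For two distinct
zeros, `K z₁ - K z₂ = (z₂ - z₁) ∫ (z₁ + t)⁻¹ (z₂ + t)⁻¹ dμ` gives `c ∫ (z₁ + t)⁻¹ (z₂ + t)⁻¹ dμ = 1`;
but for `u, v` with `Im u Im v > 0` one has `Re (u v) < (|u|² + |v|²) / 2`, and integrating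
this yields a real part strictly less than `1 / c`.
-/

open MeasureTheory Complex Set Filter

noncomputable def cauchyTransform (ν : Measure ℝ) (z : ℂ) : ℂ := ∫ t, (z + t)⁻¹ ∂ν

lemma im_le_norm_add_ofReal (z : ℂ) (t : ℝ) : z.im ≤ ‖z + t‖ := by
  simpa using im_le_norm (z + t)

lemma add_ofReal_ne_zero {z : ℂ} (hz : 0 < z.im) (t : ℝ) : z + t ≠ 0 :=
  norm_pos_iff.1 (hz.trans_le (im_le_norm_add_ofReal z t))

lemma norm_inv_add_ofReal_le_inv_im {z : ℂ} (hz : 0 < z.im) (t : ℝ) : ‖(z + t)⁻¹‖ ≤ z.im⁻¹ := by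
  rw [norm_inv]
  exact inv_anti₀ hz (im_le_norm_add_ofReal z t)

lemma norm_inv_add_ofReal_le {z : ℂ} (hz : 0 < z.im) {t : ℝ} (ht : 0 < t) :
    ‖(z + t)⁻¹‖ ≤ (1 + ‖z‖ / z.im) * t⁻¹ := by
  have him := im_le_norm_add_ofReal z t
  have hnorm : 0 < ‖z + t‖ := hz.trans_le him
  have htri : t ≤ ‖z + t‖ + ‖z‖ := by
    simpa [abs_of_pos ht] using norm_sub_le (z + t) z
  have hz_le : ‖z‖ ≤ ‖z‖ / z.im * ‖z + t‖ := by
    rw [div_mul_eq_mul_div, le_div_iff₀ hz]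
    exact mul_le_mul_of_nonneg_left him (norm_nonneg z)
  rw [norm_inv, ← div_eq_mul_inv, le_div_iff₀ ht, inv_mul_le_iff₀ hnorm]
  linarith

lemma im_inv_add_ofReal (z : ℂ) (t : ℝ) : ((z + t)⁻¹).im = -z.im * normSq (z + t)⁻¹ := by
  simp [inv_im, div_eq_mul_inv]

lemma im_inv_add_ofReal_neg {z : ℂ} (hz : 0 < z.im) (t : ℝ) : ((z + t)⁻¹).im < 0 := by
  rw [inv_im, neg_div]
  exact neg_neg_of_pos (div_pos (by simpa using hz) (normSq_pos.2 (add_ofReal_ne_zero hz t)))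

lemma re_inv_add_ofReal_pos {z : ℂ} (hz : 0 < z.im) (hre : 0 ≤ z.re) {t : ℝ} (ht : 0 < t) :
    0 < ((z + t)⁻¹).re := by
  rw [inv_re]
  exact div_pos (by simp only [add_re, ofReal_re]; linarith) (normSq_pos.2 (add_ofReal_ne_zero hz t))

lemma re_mul_lt_half_normSq_add {u v : ℂ} (h : 0 < u.im * v.im) :
    (u * v).re < (normSq u + normSq v) / 2 := by
  rw [mul_re, normSq_apply, normSq_apply]
  nlinarith [sq_nonneg (u.re - v.re)]

lemma integral_pos_of_ae_pos {α : Type*} [MeasurableSpace α] {ν : Measure α} {f : α → ℝ}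
    (hν : ν ≠ 0) (hfi : Integrable f ν) (hf : ∀ᵐ x ∂ν, 0 < f x) : 0 < ∫ x, f x ∂ν := by
  rw [integral_pos_iff_support_of_nonneg_ae (hf.mono fun _ h => h.le) hfi, pos_iff_ne_zero]
  intro h0
  refine hν (ae_eq_bot.1 (eventually_false_iff_eq_bot.1 ?_))
  filter_upwards [hf, measure_eq_zero_iff_ae_notMem.1 h0] with x hpos hzero
  exact hzero hpos.ne'

lemma integrable_inv_restrict_Ioi {μ : Measure ℝ}
    (hint : ∫⁻ t in Ioi 0, ENNReal.ofReal t⁻¹ ∂μ < ⊤) :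
    Integrable (fun t : ℝ => t⁻¹) (μ.restrict (Ioi 0)) := by
  refine ⟨measurable_inv.aestronglyMeasurable, (hasFiniteIntegral_iff_ofReal ?_).2 hint⟩
  filter_upwards [ae_restrict_mem measurableSet_Ioi] with t ht using inv_nonneg.2 (le_of_lt ht)

section CauchyTransform

variable {ν : Measure ℝ} {c : ℝ} {z z₁ z₂ : ℂ}

lemma aestronglyMeasurable_inv_add_ofReal (hz : 0 < z.im) :
    AEStronglyMeasurable (fun t : ℝ => (z + t)⁻¹) ν :=
  ((continuous_const.add continuous_ofReal).inv₀ (add_ofReal_ne_zero hz)).aestronglyMeasurable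

lemma integrable_inv_add_ofReal (hpos : ∀ᵐ t ∂ν, 0 < t) (hinv : Integrable (fun t : ℝ => t⁻¹) ν)
    (hz : 0 < z.im) : Integrable (fun t : ℝ => (z + t)⁻¹) ν :=
  (hinv.const_mul _).mono' (aestronglyMeasurable_inv_add_ofReal hz)
    (hpos.mono fun _ ht => norm_inv_add_ofReal_le hz ht)

lemma integrable_inv_add_ofReal_mul (hK : Integrable (fun t : ℝ => (z₁ + t)⁻¹) ν)
    (hz₂ : 0 < z₂.im) : Integrable (fun t : ℝ => (z₁ + t)⁻¹ * (z₂ + t)⁻¹) ν :=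
  hK.mul_bdd (aestronglyMeasurable_inv_add_ofReal hz₂)
    (Eventually.of_forall (norm_inv_add_ofReal_le_inv_im hz₂))

lemma integrable_normSq_inv_add_ofReal (hK : Integrable (fun t : ℝ => (z + t)⁻¹) ν)
    (hz : 0 < z.im) : Integrable (fun t : ℝ => normSq (z + t)⁻¹) ν := by
  refine (hK.im.div_const (-z.im)).congr (Eventually.of_forall fun t => ?_)
  simp only [RCLike.im_to_complex, im_inv_add_ofReal]
  field_simp [hz.ne']

lemma im_cauchyTransform (hK : Integrable (fun t : ℝ => (z + t)⁻¹) ν) :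
    (cauchyTransform ν z).im = -z.im * ∫ t, normSq (z + t)⁻¹ ∂ν := by
  rw [cauchyTransform, ← integral_const_mul, ← RCLike.im_to_complex, ← integral_im hK]
  simp only [RCLike.im_to_complex, im_inv_add_ofReal]

lemma cauchyTransform_sub (hK₁ : Integrable (fun t : ℝ => (z₁ + t)⁻¹) ν)
    (hK₂ : Integrable (fun t : ℝ => (z₂ + t)⁻¹) ν) (hz₁ : 0 < z₁.im) (hz₂ : 0 < z₂.im) :
    cauchyTransform ν z₁ - cauchyTransform ν z₂
      = (z₂ - z₁) * ∫ t, (z₁ + t)⁻¹ * (z₂ + t)⁻¹ ∂ν := by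
  rw [cauchyTransform, cauchyTransform, ← integral_sub hK₁ hK₂, ← integral_const_mul]
  refine integral_congr_ae (Eventually.of_forall fun t => ?_)
  simp only [inv_sub_inv (add_ofReal_ne_zero hz₁ t) (add_ofReal_ne_zero hz₂ t), div_eq_mul_inv,
    mul_inv, add_sub_add_right_eq_sub]

lemma measure_ne_zero_of_add_mul_cauchyTransform_eq_zero (hz : 0 < z.im)
    (h : z + c * cauchyTransform ν z = 0) : ν ≠ 0 := by
  rintro rfl
  simp only [cauchyTransform, integral_zero_measure, mul_zero, add_zero] at h
  simp [h] at hz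

lemma mul_integral_normSq_inv_eq_one (hK : Integrable (fun t : ℝ => (z + t)⁻¹) ν)
    (hz : 0 < z.im) (h : z + c * cauchyTransform ν z = 0) :
    c * ∫ t, normSq (z + t)⁻¹ ∂ν = 1 := by
  have him := congrArg im h
  rw [add_im, im_ofReal_mul, im_cauchyTransform hK, zero_im] at him
  have : z.im * (1 - c * ∫ t, normSq (z + t)⁻¹ ∂ν) = 0 := by linear_combination him
  linarith [(mul_eq_zero.1 this).resolve_left hz.ne']

lemma pos_of_add_mul_cauchyTransform_eq_zero (hK : Integrable (fun t : ℝ => (z + t)⁻¹) ν)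
    (hz : 0 < z.im) (h : z + c * cauchyTransform ν z = 0) : 0 < c :=
  pos_of_mul_pos_left ((mul_integral_normSq_inv_eq_one hK hz h).symm ▸ one_pos)
    (integral_nonneg fun _ => normSq_nonneg _)

lemma re_neg_of_add_mul_cauchyTransform_eq_zero (hpos : ∀ᵐ t ∂ν, 0 < t)
    (hK : Integrable (fun t : ℝ => (z + t)⁻¹) ν) (hz : 0 < z.im)
    (h : z + c * cauchyTransform ν z = 0) : z.re < 0 := by
  by_contra! hre
  have hK_re : 0 < (cauchyTransform ν z).re := by
    rw [cauchyTransform, ← RCLike.re_to_complex, ← integral_re hK]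
    exact integral_pos_of_ae_pos (measure_ne_zero_of_add_mul_cauchyTransform_eq_zero hz h) hK.re
      (hpos.mono fun _ ht => re_inv_add_ofReal_pos hz hre ht)
  have hc := pos_of_add_mul_cauchyTransform_eq_zero hK hz h
  have hre_eq := congrArg re h
  rw [add_re, re_ofReal_mul, zero_re] at hre_eq
  nlinarith [mul_pos hc hK_re]

lemma re_integral_inv_mul_inv_lt (hK₁ : Integrable (fun t : ℝ => (z₁ + t)⁻¹) ν)
    (hK₂ : Integrable (fun t : ℝ => (z₂ + t)⁻¹) ν) (hz₁ : 0 < z₁.im) (hz₂ : 0 < z₂.im)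
    (hν : ν ≠ 0) :
    (∫ t, (z₁ + t)⁻¹ * (z₂ + t)⁻¹ ∂ν).re
      < ((∫ t, normSq (z₁ + t)⁻¹ ∂ν) + ∫ t, normSq (z₂ + t)⁻¹ ∂ν) / 2 := by
  have hprod := integrable_inv_add_ofReal_mul hK₁ hz₂
  have hS₁ := integrable_normSq_inv_add_ofReal hK₁ hz₁
  have hS₂ := integrable_normSq_inv_add_ofReal hK₂ hz₂
  have hmean : Integrable (fun t : ℝ => (normSq (z₁ + t)⁻¹ + normSq (z₂ + t)⁻¹) / 2) ν :=
    (hS₁.add hS₂).div_const 2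
  have hprod_re : Integrable (fun t : ℝ => ((z₁ + t)⁻¹ * (z₂ + t)⁻¹).re) ν := hprod.re
  have hgap : 0 < ∫ t, ((normSq (z₁ + t)⁻¹ + normSq (z₂ + t)⁻¹) / 2
      - ((z₁ + t)⁻¹ * (z₂ + t)⁻¹).re) ∂ν := by
    refine integral_pos_of_ae_pos hν (hmean.sub hprod_re) (Eventually.of_forall fun t => ?_)
    exact sub_pos.2 (re_mul_lt_half_normSq_add
      (mul_pos_of_neg_of_neg (im_inv_add_ofReal_neg hz₁ t) (im_inv_add_ofReal_neg hz₂ t)))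
  have hprod_re_eq : ∫ t, ((z₁ + t)⁻¹ * (z₂ + t)⁻¹).re ∂ν
      = (∫ t, (z₁ + t)⁻¹ * (z₂ + t)⁻¹ ∂ν).re := integral_re hprod
  rwa [integral_sub hmean hprod_re, integral_div, integral_add hS₁ hS₂, hprod_re_eq, sub_pos]
    at hgap

lemma eq_of_add_mul_cauchyTransform_eq_zero (hK₁ : Integrable (fun t : ℝ => (z₁ + t)⁻¹) ν)
    (hK₂ : Integrable (fun t : ℝ => (z₂ + t)⁻¹) ν) (hz₁ : 0 < z₁.im) (hz₂ : 0 < z₂.im)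
    (h₁ : z₁ + c * cauchyTransform ν z₁ = 0) (h₂ : z₂ + c * cauchyTransform ν z₂ = 0) :
    z₁ = z₂ := by
  by_contra hne
  set I := ∫ t, (z₁ + t)⁻¹ * (z₂ + t)⁻¹ ∂ν
  have hI : (c : ℂ) * I = 1 := by
    have hsub := cauchyTransform_sub hK₁ hK₂ hz₁ hz₂
    refine mul_left_cancel₀ (sub_ne_zero.2 hne) ?_
    linear_combination h₂ - h₁ + (c : ℂ) * hsub
  have hI_re : c * I.re = 1 := by simpa only [re_ofReal_mul, one_re] using congrArg re hI
  have hlt := re_integral_inv_mul_inv_lt hK₁ hK₂ hz₁ hz₂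
    (measure_ne_zero_of_add_mul_cauchyTransform_eq_zero hz₁ h₁)
  have hc := pos_of_add_mul_cauchyTransform_eq_zero hK₁ hz₁ h₁
  nlinarith [mul_lt_mul_of_pos_left hlt hc, mul_integral_normSq_inv_eq_one hK₁ hz₁ h₁,
    mul_integral_normSq_inv_eq_one hK₂ hz₂ h₂]

end CauchyTransform

theorem GP1_at_most_one_zero_upper_half_plane_general
    (μ : Measure ℝ)
    (hint : ∫⁻ t in Set.Ioi (0 : ℝ), ENNReal.ofReal t⁻¹ ∂μ < ⊤)
    (K : ℂ → ℂ) (hK : ∀ z, K z = ∫ t in Set.Ioi (0 : ℝ), (z + (t : ℂ))⁻¹ ∂μ)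
    (n : ℕ) :
    (∀ z₁ z₂ : ℂ, 0 < z₁.im → 0 < z₂.im →
        z₁ + (n : ℂ) ^ 2 * K z₁ = 0 → z₂ + (n : ℂ) ^ 2 * K z₂ = 0 → z₁ = z₂) ∧
    (∀ z : ℂ, 0 < z.im → z + (n : ℂ) ^ 2 * K z = 0 → z.re < 0) := by
  have hpos : ∀ᵐ t ∂(μ.restrict (Ioi 0)), 0 < t := ae_restrict_mem measurableSet_Ioi
  have hint' {z : ℂ} (hz : 0 < z.im) : Integrable (fun t : ℝ => (z + t)⁻¹) (μ.restrict (Ioi 0)) :=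
    integrable_inv_add_ofReal hpos (integrable_inv_restrict_Ioi hint) hz
  obtain rfl : K = cauchyTransform (μ.restrict (Ioi 0)) := funext hK
  have hn : (n : ℂ) ^ 2 = ((n ^ 2 : ℝ) : ℂ) := by push_cast; rfl
  simp only [hn]
  exact ⟨fun z₁ z₂ hz₁ hz₂ => eq_of_add_mul_cauchyTransform_eq_zero (hint' hz₁) (hint' hz₂) hz₁ hz₂,
    fun z hz => re_neg_of_add_mul_cauchyTransform_eq_zero hpos (hint' hz) hz⟩

theorem GP1_at_most_one_zero_upper_half_plane
    (μ : Measure ℝ) (hμ : μ ≠ 0) (hsupp : μ (Set.Iic 0) = 0)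
    (hint : ∫⁻ t in Set.Ioi (0 : ℝ), ENNReal.ofReal t⁻¹ ∂μ < ⊤)
    (K : ℂ → ℂ) (hK : ∀ z, K z = ∫ t in Set.Ioi (0 : ℝ), (z + (t : ℂ))⁻¹ ∂μ)
    (n : ℕ) (hn : 1 ≤ n) :
    (∀ z₁ z₂ : ℂ, 0 < z₁.im → 0 < z₂.im →
        z₁ + (n : ℂ) ^ 2 * K z₁ = 0 → z₂ + (n : ℂ) ^ 2 * K z₂ = 0 → z₁ = z₂) ∧
    (∀ z : ℂ, 0 < z.im → z + (n : ℂ) ^ 2 * K z = 0 → z.re < 0) :=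
  GP1_at_most_one_zero_upper_half_plane_general μ hint K hK n
end
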